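/- arXiv:2204.13332 — 2 statements merged into one kernel-verified Lean document; each statement's English description precedes it below -/
import Mathlib

section
/- Let T be a commutative ring, let R be a strongly indecomposable T-algebra, let n ≥ 1, and let K = T(n,R) be the algebra of upper triangular n×n matrices over R. Then every T-algebra automorphism φ of K is a product of an inner automorphism and a ring automorphism: there exist an invertible element u of K and a T-algebra automorphism α of R such that φ(A) = u · ᾱ(A) · u⁻¹ for all A ∈ K, where ᾱ applies α entrywise. -/
/-- The `T`-subalgebra of upper triangular `n × n` matrices over `R`. -/
def triangularSubalgebra (T R : Type*) [CommRing T] [Ring R] [Algebra T R] (n : ℕ) :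
    Subalgebra T (Matrix (Fin n) (Fin n) R) where
  carrier := {A | ∀ ⦃i j : Fin n⦄, j < i → A i j = 0}
  add_mem' := fun {A B} hA hB i j hij => by
    simp [Matrix.add_apply, hA hij, hB hij]
  mul_mem' := fun {A B} hA hB i j hij => by
    simp only [Matrix.mul_apply]
    refine Finset.sum_eq_zero fun k _ => ?_
    rcases lt_or_ge k i with h | h
    · rw [hA h, zero_mul]
    · rw [hB (lt_of_lt_of_le hij h), mul_zero]
  algebraMap_mem' := fun t i j hij => by
    simp [Matrix.algebraMap_matrix_apply, (ne_of_lt hij).symm]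

/-- The set of strictly upper triangular matrices inside the triangular matrix algebra. -/
def strictlyUpper (T R : Type*) [CommRing T] [Ring R] [Algebra T R] (n : ℕ) :
    Set (triangularSubalgebra T R n) :=
  {A | ∀ i j : Fin n, j ≤ i → (A : Matrix (Fin n) (Fin n) R) i j = 0}

/-- The entrywise action of an automorphism `α` of `R` on the triangular matrix algebra. -/
def entrywiseMap (T R : Type*) [CommRing T] [Ring R] [Algebra T R] (n : ℕ)
    (α : R ≃ₐ[T] R) (A : triangularSubalgebra T R n) : triangularSubalgebra T R n :=
  ⟨Matrix.of fun i j => α ((A : Matrix (Fin n) (Fin n) R) i j),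
    fun i j hij => by simp [Matrix.of_apply, A.2 hij]⟩

/-!
The diagonal idempotents `g k = E₀₀ + ⋯ + E_{k-1,k-1}` are semicentral, hence so are their
images `φ (g k)`. Since `R` is strongly indecomposable, the diagonal of a semicentral idempotent of
`T(n,R)` is the indicator of an initial segment `{p | p < m}`. Writing `m k` for the length
attached to `φ (g k)`, the map `k ↦ m k` on `{0, …, n}` is strictly increasing: `φ (E_kk)` is a
nonzero idempotent, and an idempotent with zero diagonal is nilpotent, hence zero. So `m k = k`
and `φ (E_kk)` has the diagonal of `E_kk`; then `u = ∑ E_kk φ (E_kk)` is unipotent and conjugates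
every `φ (E_kk)` to `E_kk`.

An automorphism `ψ` fixing every `E_kk` preserves each corner: `ψ (r E_ij) = σ_ij(r) E_ij` with
`σ_ij(r) σ_jk(s) = σ_ik(r s)`. Hence `α = σ₀₀` is an automorphism of `R`, the `c_j = σ₀ⱼ(1)` are
units, and `σ_ij(r) = c_i⁻¹ α(r) c_j`: `ψ` is `ᾱ` followed by conjugation by `diag(c)⁻¹`.
-/

def IsSemicentralIdempotent {A : Type*} [Ring A] (e : A) : Prop :=
  IsIdempotentElem e ∧ ∀ r, (1 - e) * r * e = 0

def IsStronglyIndecomposable (R : Type*) [Ring R] : Prop :=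
  ∀ e : R, IsSemicentralIdempotent e → e = 0 ∨ e = 1

lemma IsSemicentralIdempotent.map {A B F : Type*} [Ring A] [Ring B] [FunLike F A B]
    [RingHomClass F A B] {e : A} (he : IsSemicentralIdempotent e) (f : F)
    (hf : Function.Surjective f) : IsSemicentralIdempotent (f e) := by
  refine ⟨he.1.map f, fun r => ?_⟩
  obtain ⟨s, rfl⟩ := hf r
  rw [← map_one f, ← map_sub, ← map_mul, ← map_mul, he.2 s, map_zero]

lemma OrthogonalIdempotents.sum_mul_mul_eq_mul_sum {A ι : Type*} [Semiring A] [Fintype ι]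
    {e f : ι → A} (he : OrthogonalIdempotents e) (hf : OrthogonalIdempotents f) (j : ι) :
    (∑ k, e k * f k) * f j = e j * ∑ k, e k * f k := by
  rw [Finset.sum_mul, Finset.mul_sum]
  refine Finset.sum_congr rfl fun k _ => ?_
  rcases eq_or_ne k j with rfl | hkj
  · rw [mul_assoc, (hf.idem k).eq, ← mul_assoc, (he.idem k).eq]
  · rw [mul_assoc, hf.ortho hkj, ← mul_assoc, he.ortho hkj.symm, mul_zero, zero_mul]

namespace Matrix

lemma pow_apply_eq_zero_of_lt_add {R : Type*} [Semiring R] {n : ℕ}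
    {N : Matrix (Fin n) (Fin n) R} (hN : ∀ i j : Fin n, j ≤ i → N i j = 0) (k : ℕ)
    (i j : Fin n) (hij : (j : ℕ) < i + k) : (N ^ k) i j = 0 := by
  induction k generalizing j with
  | zero => exact one_apply_ne' (by rintro rfl; omega)
  | succ k ih =>
    rw [pow_succ, mul_apply]
    refine Finset.sum_eq_zero fun l _ => ?_
    rcases lt_or_ge (l : ℕ) (i + k) with h | h
    · rw [ih l h, zero_mul]
    · rw [hN l j (Fin.le_def.mpr (by omega)), mul_zero]

lemma pow_eq_zero_of_strictlyUpper {R : Type*} [Semiring R] {n : ℕ}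
    {N : Matrix (Fin n) (Fin n) R} (hN : ∀ i j : Fin n, j ≤ i → N i j = 0) : N ^ n = 0 :=
  ext fun i j => pow_apply_eq_zero_of_lt_add hN n i j (by omega)

lemma mul_single_mul_apply {R m : Type*} [Semiring R] [Fintype m] [DecidableEq m]
    (M N : Matrix m m R) (i j : m) (c : R) :
    (M * single i j c * N) i j = M i i * c * N j j := by
  rw [mul_apply, Finset.sum_eq_single j (fun k _ hk => by rw [mul_single_apply_of_ne _ _ _ _ _ hk,
    zero_mul]) (by simp), mul_single_apply_same]

end Matrix

namespace TriangularSubalgebra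

open Matrix

variable {T R : Type*} [CommRing T] [Ring R] [Algebra T R] {n : ℕ}

local notation "𝒯" => triangularSubalgebra T R n
local notation "𝕄" => Matrix (Fin n) (Fin n) R

lemma mul_apply_self (A B : 𝒯) (i : Fin n) :
    ((A * B : 𝒯) : 𝕄) i i = (A : 𝕄) i i * (B : 𝕄) i i := by
  rw [Subalgebra.coe_mul, mul_apply, Finset.sum_eq_single i]
  · intro k _ hk
    rcases lt_or_gt_of_ne hk with h | h
    · rw [A.2 h, zero_mul]
    · rw [B.2 h, mul_zero]
  · simp

variable (T R n) in
def diagHom : 𝒯 →ₐ[T] (Fin n → R) :=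
  AlgHom.ofLinearMap (diagLinearMap (Fin n) T R ∘ₗ (triangularSubalgebra T R n).val.toLinearMap)
    (funext fun i => one_apply_eq i) (fun A B => funext (mul_apply_self A B))

@[simp]
lemma diagHom_apply (A : 𝒯) (i : Fin n) : diagHom T R n A i = (A : 𝕄) i i := rfl

lemma isNilpotent_of_diagHom_eq_zero {A : 𝒯} (hA : diagHom T R n A = 0) : IsNilpotent A := by
  refine ⟨n, Subtype.ext ?_⟩
  rw [SubmonoidClass.coe_pow]
  refine pow_eq_zero_of_strictlyUpper fun i j hji => ?_
  rcases hji.lt_or_eq with h | rfl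
  · exact A.2 h
  · exact congrFun hA j

lemma isUnit_of_diagHom_eq_one {A : 𝒯} (hA : diagHom T R n A = 1) : IsUnit A := by
  have h := (isNilpotent_of_diagHom_eq_zero (A := A - 1) (by simp [hA])).isUnit_one_add
  rwa [add_sub_cancel] at h

variable (T) in
def diagIncl : (Fin n → R) →ₐ[T] 𝒯 :=
  (diagonalAlgHom T).codRestrict _ fun _ _ _ h => diagonal_apply_ne _ h.ne'

@[simp]
lemma coe_diagIncl (d : Fin n → R) : (diagIncl T d : 𝕄) = diagonal d := rfl

@[simp]
lemma diagHom_diagIncl (d : Fin n → R) : diagHom T R n (diagIncl T d) = d := by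
  ext; simp

variable (T R) in
def diagUnit (i : Fin n) : 𝒯 := diagIncl T (Pi.single i 1)

lemma completeOrthogonalIdempotents_diagUnit :
    CompleteOrthogonalIdempotents (diagUnit T R (n := n)) :=
  (CompleteOrthogonalIdempotents.single _).map (diagIncl T).toRingHom

@[simp]
lemma diagHom_diagUnit (i : Fin n) : diagHom T R n (diagUnit T R i) = Pi.single i 1 :=
  diagHom_diagIncl _

lemma diagUnit_ne_zero [Nontrivial R] (i : Fin n) : diagUnit T R i ≠ 0 := fun h => by
  simpa [h] using congrFun (diagHom_diagUnit (T := T) (R := R) i) i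

def prefixIndicator (k : ℕ) : Fin n → R := fun p => if (p : ℕ) < k then 1 else 0

lemma le_of_prefixIndicator_mul_eq [Nontrivial R] {a b : ℕ} (ha : a ≤ n)
    (h : prefixIndicator a * prefixIndicator b = (prefixIndicator a : Fin n → R)) : a ≤ b := by
  by_contra! hba
  simpa [prefixIndicator, hba] using congrFun h ⟨b, by omega⟩

variable (T R) in
def diagPrefix (k : ℕ) : 𝒯 := diagIncl T (prefixIndicator k)

lemma diagPrefix_mul_of_le {k l : ℕ} (h : k ≤ l) :
    diagPrefix T R k * diagPrefix T R l = (diagPrefix T R k : 𝒯) := by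
  rw [diagPrefix, diagPrefix, ← map_mul]
  congr 1
  funext p
  by_cases hp : (p : ℕ) < k
  · simp [prefixIndicator, hp, hp.trans_le h]
  · simp [prefixIndicator, hp]

lemma diagPrefix_succ_sub (i : Fin n) :
    diagPrefix T R (i + 1) - diagPrefix T R i = diagUnit T R i := by
  rw [diagPrefix, diagPrefix, diagUnit, ← map_sub]
  congr 1
  funext p
  simp only [prefixIndicator, Pi.sub_apply, Pi.single_apply, Fin.ext_iff]
  split_ifs <;> first | (exfalso; omega) | simp

lemma isSemicentralIdempotent_diagPrefix (k : ℕ) :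
    IsSemicentralIdempotent (diagPrefix T R k : 𝒯) := by
  refine ⟨diagPrefix_mul_of_le le_rfl, fun B => Subtype.ext ?_⟩
  have h1 : (1 - diagPrefix T R k : 𝒯) = diagIncl T (1 - prefixIndicator k) := by
    rw [map_sub, map_one, diagPrefix]
  ext p q
  rw [h1, Subalgebra.coe_mul, Subalgebra.coe_mul, coe_diagIncl, diagPrefix, coe_diagIncl,
    mul_diagonal, diagonal_mul]
  by_cases hq : (q : ℕ) < k
  · by_cases hp : (p : ℕ) < k
    · simp [prefixIndicator, hp]
    · simp [B.2 (Fin.lt_def.mpr (by omega) : q < p)]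
  · simp [prefixIndicator, hq]

variable (T) in
def single {i j : Fin n} (h : i ≤ j) : R →ₗ[T] 𝒯 :=
  (singleLinearMap T i j).codRestrict (triangularSubalgebra T R n).toSubmodule
    fun r => blockTriangular_single (b := id) h r

@[simp]
lemma coe_single {i j : Fin n} (h : i ≤ j) (r : R) : (single T h r : 𝕄) = Matrix.single i j r :=
  rfl

lemma single_injective {i j : Fin n} (h : i ≤ j) : Function.Injective (single T (R := R) h) :=
  fun r s hrs => by simpa using congrArg (fun A : 𝒯 => (A : 𝕄) i j) hrs

lemma single_mul_single {i j k : Fin n} (hij : i ≤ j) (hjk : j ≤ k) (r s : R) :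
    single T hij r * single T hjk s = single T (hij.trans hjk) (r * s) :=
  Subtype.ext (single_mul_single_same _ _ _ _ _)

lemma diagUnit_mul_mul_diagUnit {i j : Fin n} (h : i ≤ j) (A : 𝒯) :
    diagUnit T R i * A * diagUnit T R j = single T h ((A : 𝕄) i j) := by
  apply Subtype.ext
  simp [diagUnit, diagonal_single]

lemma diagUnit_eq_single (i : Fin n) : diagUnit T R i = single T (le_refl i) 1 :=
  Subtype.ext (diagonal_single _ _)

lemma _root_.IsSemicentralIdempotent.apply_self {f : 𝒯} (hf : IsSemicentralIdempotent f)
    (i : Fin n) : IsSemicentralIdempotent ((f : 𝕄) i i) := by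
  refine ⟨congrFun (hf.1.map (diagHom T R n)) i, fun r => ?_⟩
  have h := congrFun (congrArg (diagHom T R n) (hf.2 (diagIncl T (Pi.single i r)))) i
  rw [map_mul, map_mul, map_sub, map_one, map_zero, diagHom_diagIncl] at h
  simpa using h

lemma _root_.IsSemicentralIdempotent.apply_self_eq_one_of_le {f : 𝒯}
    (hf : IsSemicentralIdempotent f) {i j : Fin n} (hij : i ≤ j) (hj : (f : 𝕄) j j = 1) :
    (f : 𝕄) i i = 1 := by
  have h := congrArg (fun A : 𝒯 => (A : 𝕄) i j) (hf.2 (single T hij 1))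
  simp only [Subalgebra.coe_mul, coe_single, mul_single_mul_apply, hj] at h
  exact (sub_eq_zero.mp (by simpa using h)).symm

lemma _root_.IsSemicentralIdempotent.exists_diagHom_eq_prefixIndicator
    (hR : IsStronglyIndecomposable R) {f : 𝒯} (hf : IsSemicentralIdempotent f) :
    ∃ m : Fin (n + 1), diagHom T R n f = prefixIndicator m := by
  have h01 (p : Fin n) : (f : 𝕄) p p = 0 ∨ (f : 𝕄) p p = 1 := hR _ (hf.apply_self p)
  have hlower : IsLowerSet {p : Fin n | (f : 𝕄) p p = 1} :=
    fun _ _ hpq hq => hf.apply_self_eq_one_of_le hpq hq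
  suffices key : ∀ m : Fin (n + 1), (∀ p : Fin n, (f : 𝕄) p p = 1 ↔ (p : ℕ) < m) →
      diagHom T R n f = prefixIndicator m by
    rcases hlower.eq_univ_or_Iio with h | ⟨a, h⟩
    · exact ⟨Fin.last n, key _ fun p => iff_of_true ((Set.ext_iff.1 h p).2 trivial) p.isLt⟩
    · exact ⟨a.castSucc, key _ fun p => (Set.ext_iff.1 h p).trans Fin.lt_def⟩
  intro m hm
  funext p
  rcases h01 p with h | h
  · simp [prefixIndicator, h, ← hm p]
  · simp [prefixIndicator, h, (hm p).1 h]

lemma diagHom_map_diagUnit (hR : IsStronglyIndecomposable R) [Nontrivial R] (φ : 𝒯 ≃ₐ[T] 𝒯)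
    (i : Fin n) : diagHom T R n (φ (diagUnit T R i)) = Pi.single i 1 := by
  choose m hm using fun k : Fin (n + 1) =>
    ((isSemicentralIdempotent_diagPrefix (T := T) (R := R) (n := n) k).map φ
      φ.surjective).exists_diagHom_eq_prefixIndicator hR
  have hunit (i : Fin n) : diagHom T R n (φ (diagUnit T R i)) =
      prefixIndicator (m i.succ) - prefixIndicator (m i.castSucc) := by
    rw [← diagPrefix_succ_sub, map_sub, map_sub, ← Fin.val_succ, ← Fin.val_castSucc i, hm, hm]
  have hm_mono : StrictMono m := by
    refine Fin.strictMono_iff_lt_succ.2 fun i => lt_of_le_of_ne ?_ fun h => ?_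
    · refine le_of_prefixIndicator_mul_eq (R := R) (Nat.lt_succ_iff.mp (m _).isLt) ?_
      rw [← hm, ← hm, ← map_mul, ← map_mul, Fin.val_castSucc, Fin.val_succ,
        diagPrefix_mul_of_le (Nat.le_succ _)]
    · refine diagUnit_ne_zero (T := T) (R := R) i (φ.injective ?_)
      rw [map_zero]
      refine IsIdempotentElem.eq_zero_of_isNilpotent ?_ (isNilpotent_of_diagHom_eq_zero ?_)
      · exact (completeOrthogonalIdempotents_diagUnit.idem i).map φ
      · rw [hunit, h, sub_self]
  rw [hunit, hm_mono.eq_id]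
  funext p
  simp only [id, Fin.val_succ, Fin.val_castSucc, prefixIndicator, Pi.sub_apply, Pi.single_apply,
    Fin.ext_iff]
  split_ifs <;> first | (exfalso; omega) | simp

lemma exists_unit_conj_map_diagUnit (hR : IsStronglyIndecomposable R) [Nontrivial R]
    (φ : 𝒯 ≃ₐ[T] 𝒯) : ∃ u : 𝒯ˣ, ∀ j, ↑u * φ (diagUnit T R j) * ↑u⁻¹ = diagUnit T R j := by
  have he := (completeOrthogonalIdempotents_diagUnit (T := T) (R := R) (n := n)).1
  set u := ∑ k, diagUnit T R k * φ (diagUnit T R k)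
  have hu : IsUnit u := isUnit_of_diagHom_eq_one <| by
    simp only [u, map_sum, map_mul, diagHom_diagUnit, diagHom_map_diagUnit hR, ← Pi.single_mul,
      mul_one]
    exact Finset.univ_sum_single 1
  refine ⟨hu.unit, fun j => ?_⟩
  rw [Units.mul_inv_eq_iff_eq_mul, IsUnit.unit_spec]
  exact he.sum_mul_mul_eq_mul_sum (he.map φ.toRingHom) j

section FixingDiagonalUnits

def componentMap (ψ : 𝒯 ≃ₐ[T] 𝒯) {i j : Fin n} (h : i ≤ j) : R →ₗ[T] R :=
  entryLinearMap T R i j ∘ₗ (triangularSubalgebra T R n).val.toLinearMap ∘ₗ ψ.toLinearMap ∘ₗ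
    single T h

variable {ψ : triangularSubalgebra T R n ≃ₐ[T] triangularSubalgebra T R n}
  (hψ : ∀ j, ψ (diagUnit T R j) = diagUnit T R j)
include hψ

lemma map_single {i j : Fin n} (h : i ≤ j) (r : R) :
    ψ (single T h r) = single T h (componentMap ψ h r) := by
  have hr : single T h r = diagUnit T R i * single T h r * diagUnit T R j := by
    rw [diagUnit_mul_mul_diagUnit h]
    simp
  conv_lhs => rw [hr, map_mul, map_mul, hψ, hψ, diagUnit_mul_mul_diagUnit h]
  rfl

lemma map_apply {i j : Fin n} (h : i ≤ j) (A : 𝒯) :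
    (ψ A : 𝕄) i j = componentMap ψ h ((A : 𝕄) i j) := by
  apply single_injective (T := T) h
  rw [← map_single hψ, ← diagUnit_mul_mul_diagUnit, ← diagUnit_mul_mul_diagUnit, map_mul, map_mul,
    hψ, hψ]

lemma componentMap_mul_componentMap {i j k : Fin n} (hij : i ≤ j) (hjk : j ≤ k) (r s : R) :
    componentMap ψ hij r * componentMap ψ hjk s = componentMap ψ (hij.trans hjk) (r * s) := by
  apply single_injective (T := T) (hij.trans hjk)
  rw [← single_mul_single hij hjk, ← map_single hψ, ← map_single hψ, ← map_single hψ, ← map_mul,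
    single_mul_single]

lemma componentMap_injective {i j : Fin n} (h : i ≤ j) : Function.Injective (componentMap ψ h) :=
  fun r s hrs => single_injective h <| ψ.injective <| by rw [map_single hψ, map_single hψ, hrs]

lemma componentMap_surjective {i j : Fin n} (h : i ≤ j) : Function.Surjective (componentMap ψ h) :=
  fun s => ⟨(ψ.symm (single T h s) : 𝕄) i j, by rw [← map_apply hψ, ψ.apply_symm_apply]; simp⟩

lemma componentMap_self_one (i : Fin n) : componentMap ψ (le_refl i) 1 = 1 := by
  apply single_injective (T := T) (le_refl i)
  rw [← map_single hψ, ← diagUnit_eq_single, hψ, diagUnit_eq_single]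

lemma isUnit_componentMap_one {i j : Fin n} (h : i ≤ j) : IsUnit (componentMap ψ h 1) := by
  obtain ⟨x, hx⟩ := componentMap_surjective hψ h 1
  have hl : componentMap ψ (le_refl i) x * componentMap ψ h 1 = 1 := by
    rw [componentMap_mul_componentMap hψ, mul_one, hx]
  have hr : componentMap ψ h 1 * componentMap ψ (le_refl j) x = 1 := by
    rw [componentMap_mul_componentMap hψ, one_mul, hx]
  exact ⟨⟨_, _, hr, left_inv_eq_right_inv hl hr ▸ hl⟩, rfl⟩

noncomputable def baseAlgEquiv (i : Fin n) : R ≃ₐ[T] R :=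
  AlgEquiv.ofBijective
    (AlgHom.ofLinearMap (componentMap ψ (le_refl i)) (componentMap_self_one hψ i)
      fun r s => (componentMap_mul_componentMap hψ _ _ r s).symm)
    ⟨componentMap_injective hψ _, componentMap_surjective hψ _⟩

lemma baseAlgEquiv_apply (i : Fin n) (r : R) :
    baseAlgEquiv hψ i r = componentMap ψ (le_refl i) r := rfl

lemma exists_eq_conj_entrywiseMap (hn : 1 ≤ n) :
    ∃ (w : 𝒯ˣ) (α : R ≃ₐ[T] R), ∀ A, ψ A = ↑w * entrywiseMap T R n α A * ↑w⁻¹ := by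
  let z : Fin n := ⟨0, hn⟩
  have hz (p : Fin n) : z ≤ p := Fin.le_def.mpr (Nat.zero_le _)
  let c (p : Fin n) : Rˣ := (isUnit_componentMap_one hψ (hz p)).unit
  have hc {p q : Fin n} (hpq : p ≤ q) (r : R) :
      componentMap ψ hpq r = ↑(c p)⁻¹ * baseAlgEquiv hψ z r * c q := by
    rw [mul_assoc, Units.eq_inv_mul_iff_mul_eq, IsUnit.unit_spec, IsUnit.unit_spec,
      baseAlgEquiv_apply, componentMap_mul_componentMap hψ, componentMap_mul_componentMap hψ,
      one_mul, mul_one]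
  let w : 𝒯ˣ := Units.map (diagIncl T).toMonoidHom (MulEquiv.piUnits.symm fun p => (c p)⁻¹)
  have hw : (w : 𝕄) = diagonal fun p => ↑(c p)⁻¹ := rfl
  have hw_inv : (↑w⁻¹ : 𝕄) = diagonal fun p => ↑(c p) := rfl
  refine ⟨w, baseAlgEquiv hψ z, fun A => Subtype.ext ?_⟩
  ext p q
  rw [Subalgebra.coe_mul, Subalgebra.coe_mul, hw, hw_inv, mul_diagonal, diagonal_mul]
  change _ = _ * baseAlgEquiv hψ z ((A : 𝕄) p q) * _
  rcases le_or_gt p q with hpq | hqp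
  · rw [map_apply hψ hpq, hc hpq]
  · simp [(ψ A).2 hqp, A.2 hqp]

end FixingDiagonalUnits

end TriangularSubalgebra

/-- If `R` is a strongly indecomposable `T`-algebra (its only semicentral idempotents are
`0` and `1`), every `T`-algebra automorphism of the upper triangular matrix algebra
`T(n,R)` is a product of an inner automorphism and a ring automorphism. -/
theorem stmt10 (T R : Type*) [CommRing T] [Ring R] [Algebra T R] (n : ℕ) (hn : 1 ≤ n)
    (hstrong : ∀ e : R, e * e = e → (∀ r : R, (1 - e) * r * e = 0) → e = 0 ∨ e = 1)
    (φ : triangularSubalgebra T R n ≃ₐ[T] triangularSubalgebra T R n) :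
    ∃ (u : (triangularSubalgebra T R n)ˣ) (α : R ≃ₐ[T] R),
      ∀ A : triangularSubalgebra T R n,
        φ A = ↑u * entrywiseMap T R n α A * ↑u⁻¹ := by
  rcases subsingleton_or_nontrivial R with _ | _
  · exact ⟨1, AlgEquiv.refl, fun _ => Subsingleton.elim _ _⟩
  obtain ⟨u, hu⟩ :=
    TriangularSubalgebra.exists_unit_conj_map_diagUnit (fun e he => hstrong e he.1 he.2) φ
  let ψ := φ.trans (MulSemiringAction.toAlgEquiv T _ (ConjAct.toConjAct u))
  have hψ (A) : ψ A = ↑u * φ A * ↑u⁻¹ := ConjAct.units_smul_def _ _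
  obtain ⟨w, α, hw⟩ :=
    TriangularSubalgebra.exists_eq_conj_entrywiseMap (ψ := ψ) (fun j => (hψ _).trans (hu j)) hn
  refine ⟨u⁻¹ * w, α, fun A => ?_⟩
  calc φ A = ↑u⁻¹ * ψ A * ↑u := by simp [hψ, mul_assoc]
    _ = ↑(u⁻¹ * w) * entrywiseMap T R n α A * ↑(u⁻¹ * w)⁻¹ := by simp [hw, mul_assoc]
end

section
/- Let T be a commutative ring, let R be a semiprime T-algebra, let n ≥ 1, and let K = T(n,R) be the algebra of upper triangular n×n matrices over R. Then every T-algebra automorphism φ of K is a product of an inner automorphism and a ring automorphism: there exist an invertible element u of K and a T-algebra automorphism α of R such that φ(A) = u · ᾱ(A) · u⁻¹ for all A ∈ K, where ᾱ applies α entrywise. -/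
def IsSemiprimeRing (R : Type*) [Ring R] : Prop :=
  ∀ I : TwoSidedIdeal R, (∀ x ∈ I, ∀ y ∈ I, x * y = 0) → I = ⊥

section Semiprime

variable {R : Type*} [Ring R]

/-- All products of `m` elements of the form `p * a * q` vanish, i.e. the two-sided ideal
generated by `a` has nilpotency index at most `m`. -/
def SandwichNilpotent (m : ℕ) (a : R) : Prop :=
  ∀ l : List (R × R), l.length = m → (l.map fun p => p.1 * a * p.2).prod = 0

theorem SandwichNilpotent.map {S : Type*} [Ring S] (f : R ≃+* S) {m : ℕ} {a : R}
    (ha : SandwichNilpotent m a) : SandwichNilpotent m (f a) := by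
  intro l hl
  have h := congrArg f (ha (l.map fun p => (f.symm p.1, f.symm p.2)) (by simp [hl]))
  simpa [map_list_prod, List.map_map, Function.comp_def] using h

theorem IsSemiprimeRing.eq_zero_of_forall_mul_mul_eq_zero (hR : IsSemiprimeRing R) {x : R}
    (hx : ∀ r, x * r * x = 0) : x = 0 := by
  set I := TwoSidedIdeal.span {x}
  have hxI : ∀ b ∈ I, ∀ r, x * r * b = 0 := fun b hb => by
    induction hb using TwoSidedIdeal.span_induction with
    | mem y hy => rw [Set.mem_singleton_iff.mp hy]; exact hx
    | zero => simp
    | add y z _ _ hy hz => intro r; rw [mul_add, hy, hz, add_zero]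
    | neg y _ hy => intro r; rw [mul_neg, hy, neg_zero]
    | left_absorb a y _ hy => intro r; rw [← mul_assoc, mul_assoc x, hy]
    | right_absorb b y _ hy => intro r; rw [← mul_assoc, hy, zero_mul]
  have hI : ∀ a ∈ I, ∀ b ∈ I, a * b = 0 := fun a ha => by
    induction ha using TwoSidedIdeal.span_induction with
    | mem y hy => intro b hb; rw [Set.mem_singleton_iff.mp hy]; simpa using hxI b hb 1
    | zero => simp
    | add y z _ _ hy hz => intro b hb; rw [add_mul, hy b hb, hz b hb, add_zero]
    | neg y _ hy => intro b hb; rw [neg_mul, hy b hb, neg_zero]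
    | left_absorb c y _ hy => intro b hb; rw [mul_assoc, hy b hb, mul_zero]
    | right_absorb c y _ hy => intro b hb; rw [mul_assoc, hy _ (I.mul_mem_left c b hb)]
  have hx : x ∈ I := TwoSidedIdeal.subset_span (Set.mem_singleton x)
  rwa [hR I hI, TwoSidedIdeal.mem_bot] at hx

theorem IsSemiprimeRing.eq_zero_of_sandwichNilpotent (hR : IsSemiprimeRing R) {m : ℕ}
    (hm : m ≠ 0) {x : R} (hx : SandwichNilpotent m x) : x = 0 := by
  induction m with
  | zero => contradiction
  | succ m ih =>
    rcases eq_or_ne m 0 with rfl | hm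
    · simpa using hx [(1, 1)] rfl
    refine ih hm fun l hl => hR.eq_zero_of_forall_mul_mul_eq_zero fun r => ?_
    rcases l with _ | ⟨p, l⟩
    · simp_all
    have h := hx (p :: l ++ [(r * p.1, p.2)]) (by simp_all)
    simp only [List.map_append, List.prod_append, List.map_cons, List.prod_cons, List.map_nil,
      List.prod_nil, mul_one] at h ⊢
    set y := (l.map fun p => p.1 * x * p.2).prod
    calc p.1 * x * p.2 * y * r * (p.1 * x * p.2 * y)
        = p.1 * x * p.2 * y * (r * p.1 * x * p.2) * y := by simp only [mul_assoc]
      _ = 0 := by rw [h, zero_mul]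

end Semiprime

section IdempotentConj

variable {B : Type*} [Ring B] {P Q : B}

theorem mul_self_eq_of_mul_eq_of_mul_eq (hQP : Q * P = Q) (hPQ : P * Q = P) : Q * Q = Q :=
  calc Q * Q = Q * P * Q := by rw [hQP]
    _ = Q := by rw [mul_assoc, hPQ, hQP]

/-- The hypotheses say that `P` and `Q` are idempotents generating the same left ideal. -/
def idempotentConjUnit (hQP : Q * P = Q) (hPQ : P * Q = P) : Bˣ where
  val := 1 + Q - P
  inv := 1 + P - Q
  val_inv := by
    simp only [mul_add, add_mul, mul_sub, sub_mul, one_mul, mul_one, hQP, hPQ,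
      mul_self_eq_of_mul_eq_of_mul_eq hQP hPQ, mul_self_eq_of_mul_eq_of_mul_eq hPQ hQP]
    abel
  inv_val := by
    simp only [mul_add, add_mul, mul_sub, sub_mul, one_mul, mul_one, hQP, hPQ,
      mul_self_eq_of_mul_eq_of_mul_eq hQP hPQ, mul_self_eq_of_mul_eq_of_mul_eq hPQ hQP]
    abel

variable (hQP : Q * P = Q) (hPQ : P * Q = P)

theorem idempotentConjUnit_conj :
    ↑(idempotentConjUnit hQP hPQ) * P * ↑(idempotentConjUnit hQP hPQ)⁻¹ = Q := by
  change (1 + Q - P) * P * (1 + P - Q) = Q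
  simp only [mul_add, add_mul, mul_sub, sub_mul, one_mul, mul_one, hQP, hPQ,
    mul_self_eq_of_mul_eq_of_mul_eq hQP hPQ, mul_self_eq_of_mul_eq_of_mul_eq hPQ hQP]
  abel

theorem idempotentConjUnit_conj_of {X : B} (hl : P * X = Q * X) (hr : X * P = X * Q) :
    ↑(idempotentConjUnit hQP hPQ) * X * ↑(idempotentConjUnit hQP hPQ)⁻¹ = X := by
  change (1 + Q - P) * X * (1 + P - Q) = X
  simp only [mul_add, add_mul, mul_sub, sub_mul, one_mul, mul_one, hl, hr]
  abel

end IdempotentConj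

namespace Matrix

variable {R : Type*} [NonUnitalNonAssocSemiring R] {n : ℕ}

def VanishesBelowDiag (k : ℕ) (A : Matrix (Fin n) (Fin n) R) : Prop :=
  ∀ i j : Fin n, (j : ℕ) < i + k → A i j = 0

theorem VanishesBelowDiag.mul {k l : ℕ} {A B : Matrix (Fin n) (Fin n) R}
    (hA : VanishesBelowDiag k A) (hB : VanishesBelowDiag l B) :
    VanishesBelowDiag (k + l) (A * B) := fun i j hij => by
  rw [Matrix.mul_apply]
  refine Finset.sum_eq_zero fun m _ => ?_
  rcases lt_or_ge (m : ℕ) (i + k) with hm | hm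
  · rw [hA i m hm, zero_mul]
  · rw [hB m j (by omega), mul_zero]

theorem VanishesBelowDiag.eq_zero {k : ℕ} {A : Matrix (Fin n) (Fin n) R}
    (hA : VanishesBelowDiag k A) (hk : n ≤ k) : A = 0 :=
  Matrix.ext fun i j => hA i j (by omega)

end Matrix

namespace triangularSubalgebra

open Matrix (VanishesBelowDiag)

variable {T R : Type*} [CommRing T] [Ring R] [Algebra T R] {n : ℕ}

local notation "K" => triangularSubalgebra T R n

theorem vanishesBelowDiag_zero (A : K) : VanishesBelowDiag 0 A.1 := fun _ _ h => A.2 h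

theorem mem_strictlyUpper_iff {A : K} : A ∈ strictlyUpper T R n ↔ VanishesBelowDiag 1 A.1 :=
  ⟨fun h i j hij => h i j (Fin.le_def.2 (by omega)),
    fun h i j hij => h i j (by rw [Fin.le_def] at hij; omega)⟩

theorem mul_mul_mem_strictlyUpper (p q : K) {a : K} (ha : a ∈ strictlyUpper T R n) :
    p * a * q ∈ strictlyUpper T R n :=
  mem_strictlyUpper_iff.2 <|
    ((vanishesBelowDiag_zero p).mul (mem_strictlyUpper_iff.1 ha)).mul (vanishesBelowDiag_zero q)

theorem vanishesBelowDiag_list_prod (l : List K) (hl : ∀ x ∈ l, x ∈ strictlyUpper T R n) :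
    VanishesBelowDiag l.length l.prod.1 := by
  induction l with
  | nil => exact vanishesBelowDiag_zero 1
  | cons x l ih =>
    rw [List.length_cons, add_comm, List.prod_cons]
    exact (mem_strictlyUpper_iff.1 (hl x List.mem_cons_self)).mul
      (ih fun y hy => hl y (List.mem_cons_of_mem x hy))

def single (i j : Fin n) (h : i ≤ j) (r : R) : K :=
  ⟨Matrix.single i j r, fun _ _ hba =>
    Matrix.single_apply_of_ne _ _ _ _ _ fun hab => (hab.1 ▸ hab.2 ▸ h).not_gt hba⟩

@[simp] theorem coe_single (i j : Fin n) (h : i ≤ j) (r : R) :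
    (single i j h r : K).1 = Matrix.single i j r := rfl

theorem single_apply_same (i j : Fin n) (h : i ≤ j) (r : R) : (single i j h r : K).1 i j = r :=
  Matrix.single_apply_same ..

theorem single_mul_single (i j l : Fin n) (hij : i ≤ j) (hjl : j ≤ l) (r s : R) :
    (single i j hij r : K) * single j l hjl s = single i l (hij.trans hjl) (r * s) :=
  Subtype.ext (Matrix.single_mul_single_same r i j l s)

theorem single_mul_mul_single (A : K) {i j : Fin n} (h : i ≤ j) (r s : R) :
    single i i le_rfl r * A * single j j le_rfl s = single i j h (r * A.1 i j * s) :=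
  Subtype.ext (Matrix.single_mul_mul_single ..)

theorem single_mem_strictlyUpper {i j : Fin n} (h : i < j) (r : R) :
    (single i j h.le r : K) ∈ strictlyUpper T R n := fun _ _ hba =>
  Matrix.single_apply_of_ne _ _ _ _ _ fun hab => (hab.1 ▸ hab.2 ▸ hba).not_gt h

theorem list_prod_map_single_apply (i : Fin n) (l : List R) :
    ((l.map (single i i le_rfl)).prod : K).1 i i = l.prod := by
  induction l with
  | nil => simp
  | cons r l ih =>
    rw [List.map_cons, List.prod_cons, Subalgebra.coe_mul, coe_single,
      Matrix.single_mul_apply_same, ih, List.prod_cons]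

theorem single_injective (i j : Fin n) (h : i ≤ j) :
    Function.Injective (single i j h : R → K) :=
  fun r s hrs => by simpa [single_apply_same] using congrArg (fun X : K => X.1 i j) hrs

theorem single_zero (i j : Fin n) (h : i ≤ j) : (single i j h 0 : K) = 0 :=
  Subtype.ext (Matrix.single_zero i j)

theorem single_add (i j : Fin n) (h : i ≤ j) (r s : R) :
    (single i j h (r + s) : K) = single i j h r + single i j h s :=
  Subtype.ext (Matrix.single_add i j r s)

theorem entrywiseMap_apply (α : R ≃ₐ[T] R) (A : K) (i j : Fin n) :
    (entrywiseMap T R n α A).1 i j = α (A.1 i j) := rfl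

def diagIdempotent (i : Fin n) : K := single i i le_rfl 1

theorem single_algebraMap (i : Fin n) (t : T) :
    (single i i le_rfl (algebraMap T R t) : K) = t • diagIdempotent i :=
  Subtype.ext <| by
    simp [diagIdempotent, Algebra.algebraMap_eq_smul_one, Matrix.smul_single]

theorem diagIdempotent_mul_mul_diagIdempotent (A : K) {i j : Fin n} (h : i ≤ j) :
    diagIdempotent i * A * diagIdempotent j = single i j h (A.1 i j) := by
  rw [diagIdempotent, diagIdempotent, single_mul_mul_single A h, one_mul, mul_one]

def diagonal (d : Fin n → R) : K :=
  ⟨Matrix.diagonal d, fun _ _ hba => Matrix.diagonal_apply_ne d hba.ne'⟩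

theorem diagonal_mul_diagonal (d e : Fin n → R) :
    (diagonal d : K) * diagonal e = diagonal (d * e) :=
  Subtype.ext (Matrix.diagonal_mul_diagonal d e)

theorem diagonal_mul_apply (d : Fin n → R) (A : K) (i j : Fin n) :
    (diagonal d * A).1 i j = d i * A.1 i j :=
  Matrix.diagonal_mul d A.1 i j

theorem mul_diagonal_apply (d : Fin n → R) (A : K) (i j : Fin n) :
    (A * diagonal d).1 i j = A.1 i j * d j :=
  Matrix.mul_diagonal d A.1 i j

def diagonalUnit (v : Fin n → Rˣ) : Kˣ where
  val := diagonal fun i => v i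
  inv := diagonal fun i => ↑(v i)⁻¹
  val_inv := Subtype.ext <| by
    simp [diagonal, Matrix.diagonal_mul_diagonal, Matrix.diagonal_one]
  inv_val := Subtype.ext <| by
    simp [diagonal, Matrix.diagonal_mul_diagonal, Matrix.diagonal_one]

def tailIdempotent (k : ℕ) : K := diagonal fun i => if n - k ≤ i then 1 else 0

theorem tailIdempotent_zero : (tailIdempotent 0 : K) = 0 :=
  Subtype.ext <| Matrix.ext fun i j => by
    simp [tailIdempotent, diagonal, Matrix.diagonal_apply, i.isLt.not_ge]

theorem tailIdempotent_mul_tailIdempotent (k l : ℕ) :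
    (tailIdempotent k : K) * tailIdempotent l = tailIdempotent (min k l) := by
  rw [tailIdempotent, tailIdempotent, diagonal_mul_diagonal, tailIdempotent]
  congr 1
  funext i
  simp only [Pi.mul_apply]
  split_ifs <;> simp <;> omega

theorem diagIdempotent_eq_sub (i : Fin n) :
    (diagIdempotent i : K) = tailIdempotent (n - i) - tailIdempotent (n - i - 1) := by
  refine Subtype.ext ?_
  change Matrix.single i i 1 = Matrix.diagonal _ - Matrix.diagonal _
  rw [← Matrix.diagonal_single, Matrix.diagonal_sub]
  congr 1
  funext a
  have := i.isLt
  simp only [Pi.single_apply, Fin.ext_iff]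
  split_ifs <;> simp <;> omega

theorem sandwichNilpotent_of_mem_strictlyUpper {a : K} (ha : a ∈ strictlyUpper T R n) :
    SandwichNilpotent n a := fun l hl => by
  refine Subtype.ext ((vanishesBelowDiag_list_prod _ fun x hx => ?_).eq_zero (by simp [hl]))
  obtain ⟨p, -, rfl⟩ := List.mem_map.1 hx
  exact mul_mul_mem_strictlyUpper p.1 p.2 ha

theorem mem_strictlyUpper_of_sandwichNilpotent (hR : IsSemiprimeRing R) {a : K}
    (ha : SandwichNilpotent n a) : a ∈ strictlyUpper T R n := by
  intro i j hji
  rcases hji.lt_or_eq with hlt | rfl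
  · exact a.2 hlt
  refine hR.eq_zero_of_sandwichNilpotent (Fin.pos j).ne' fun l hl => ?_
  have h : (((l.map fun p => p.1 * a.1 j j * p.2).map (single j j le_rfl)).prod : K) = 0 := by
    simpa only [List.map_map, Function.comp_def, single_mul_mul_single a le_rfl] using
      ha (l.map fun p => (single j j le_rfl p.1, single j j le_rfl p.2)) (by simp [hl])
  have := congrArg (fun X : K => X.1 j j) h
  rwa [list_prod_map_single_apply] at this

theorem map_mem_strictlyUpper (hR : IsSemiprimeRing R) (χ : K ≃+* K) {a : K}
    (ha : a ∈ strictlyUpper T R n) : χ a ∈ strictlyUpper T R n :=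
  mem_strictlyUpper_of_sandwichNilpotent hR ((sandwichNilpotent_of_mem_strictlyUpper ha).map χ)

def AnnihilatesStrictlyUpperPow (k : ℕ) (A : K) : Prop :=
  ∀ l : List K, l.length = k → (∀ x ∈ l, x ∈ strictlyUpper T R n) → A * l.prod = 0

theorem annihilatesStrictlyUpperPow_tailIdempotent (k : ℕ) :
    AnnihilatesStrictlyUpperPow k (tailIdempotent k : K) := fun l hl hlN =>
  Subtype.ext <| Matrix.ext fun a b => by
    rw [tailIdempotent, diagonal_mul_apply]
    split_ifs with ha
    · rw [vanishesBelowDiag_list_prod l hlN a b (by omega), mul_zero]; rfl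
    · rw [zero_mul]; rfl

theorem AnnihilatesStrictlyUpperPow.map (hR : IsSemiprimeRing R) (χ : K ≃+* K) {k : ℕ} {A : K}
    (hA : AnnihilatesStrictlyUpperPow k A) : AnnihilatesStrictlyUpperPow k (χ A) := by
  intro l hl hlN
  have h := congrArg χ <| hA (l.map χ.symm) (by simp [hl]) fun x hx => by
    obtain ⟨y, hy, rfl⟩ := List.mem_map.1 hx
    exact map_mem_strictlyUpper hR χ.symm (hlN y hy)
  simpa [map_list_prod, List.map_map, Function.comp_def] using h

/-- Multiplying by a chain of `k` consecutive superdiagonal matrix units moves column `j` to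
column `j + k`. -/
theorem exists_strictlyUpper_list_mul_prod_apply (k : ℕ) (j : Fin n) (hj : j + k < n) :
    ∃ l : List K, l.length = k ∧ (∀ x ∈ l, x ∈ strictlyUpper T R n) ∧
      ∀ (M : K) (a : Fin n), (M * l.prod).1 a ⟨j + k, hj⟩ = M.1 a j := by
  induction k generalizing j with
  | zero => exact ⟨[], rfl, by simp, fun M a => by simp⟩
  | succ k ih =>
    let j' : Fin n := ⟨j + 1, by omega⟩
    have hjj' : j < j' := Fin.lt_def.2 (Nat.lt_succ_self _)
    obtain ⟨l, hl, hlN, hprod⟩ := ih j' (by simp [j']; omega)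
    refine ⟨single j j' hjj'.le 1 :: l, by simp [hl], ?_, fun M a => ?_⟩
    · intro x hx
      rcases List.mem_cons.1 hx with rfl | hx
      exacts [single_mem_strictlyUpper hjj' 1, hlN x hx]
    · have : (⟨j + (k + 1), hj⟩ : Fin n) = ⟨j' + k, by simp [j']; omega⟩ :=
        Fin.ext (by simp [j']; omega)
      rw [this, List.prod_cons, ← mul_assoc, hprod, Subalgebra.coe_mul, coe_single,
        Matrix.mul_single_apply_same, mul_one]

theorem AnnihilatesStrictlyUpperPow.mul_tailIdempotent {k : ℕ} {A : K}
    (hA : AnnihilatesStrictlyUpperPow k A) : A * tailIdempotent k = A :=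
  Subtype.ext <| Matrix.ext fun a b => by
    rw [tailIdempotent, mul_diagonal_apply]
    split_ifs with hb
    · rw [mul_one]
    · obtain ⟨l, hl, hlN, hprod⟩ :=
        exists_strictlyUpper_list_mul_prod_apply (T := T) (R := R) k b (by omega)
      rw [mul_zero, ← hprod, hA l hl hlN]
      rfl

theorem map_tailIdempotent_mul_tailIdempotent (hR : IsSemiprimeRing R) (χ : K ≃+* K) (k : ℕ) :
    χ (tailIdempotent k) * tailIdempotent k = χ (tailIdempotent k) :=
  ((annihilatesStrictlyUpperPow_tailIdempotent k).map hR χ).mul_tailIdempotent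

theorem tailIdempotent_mul_map_tailIdempotent (hR : IsSemiprimeRing R) (χ : K ≃+* K) (k : ℕ) :
    tailIdempotent k * χ (tailIdempotent k) = tailIdempotent k := by
  simpa using congrArg χ (map_tailIdempotent_mul_tailIdempotent hR χ.symm k)

theorem exists_unit_conj_tailIdempotent (hR : IsSemiprimeRing R) (φ : K ≃+* K) (m : ℕ) :
    ∃ u : Kˣ, ∀ k ≤ m,
      φ (tailIdempotent k) = (u : K) * tailIdempotent k * (↑u⁻¹ : K) := by
  induction m with
  | zero => exact ⟨1, fun k hk => by simp [Nat.le_zero.1 hk, tailIdempotent_zero]⟩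
  | succ m ih =>
    obtain ⟨u, hu⟩ := ih
    let χ : K ≃+* K := φ.trans (MulSemiringAction.toRingEquiv _ K (ConjAct.toConjAct u⁻¹))
    have hφ : ∀ X, φ X = (u : K) * χ X * ↑u⁻¹ := fun X => by
      simp [χ, ConjAct.units_smul_def, mul_assoc]
    have hχ : ∀ k ≤ m, χ (tailIdempotent k) = tailIdempotent k := fun k hk => by
      simp [χ, ConjAct.units_smul_def, hu k hk, mul_assoc]
    set P : K := tailIdempotent (m + 1)
    have hQP : χ P * P = χ P := map_tailIdempotent_mul_tailIdempotent hR χ (m + 1)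
    have hPQ : P * χ P = P := tailIdempotent_mul_map_tailIdempotent hR χ (m + 1)
    let v := idempotentConjUnit hQP hPQ
    have hχv : ∀ k ≤ m + 1,
        χ (tailIdempotent k) = (v : K) * tailIdempotent k * (↑v⁻¹ : K) := by
      intro k hk
      rcases Nat.le_succ_iff.1 hk with hk | rfl
      · have hPk : P * tailIdempotent k = tailIdempotent k := by
          rw [tailIdempotent_mul_tailIdempotent, min_eq_right (by omega)]
        have hkP : tailIdempotent k * P = tailIdempotent k := by
          rw [tailIdempotent_mul_tailIdempotent, min_eq_left (by omega)]
        rw [hχ k hk, idempotentConjUnit_conj_of hQP hPQ]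
        · conv_rhs => rw [← hχ k hk, ← map_mul, hPk, hχ k hk]
          exact hPk
        · conv_rhs => rw [← hχ k hk, ← map_mul, hkP, hχ k hk]
          exact hkP
      · exact (idempotentConjUnit_conj hQP hPQ).symm
    refine ⟨u * v, fun k hk => ?_⟩
    rw [hφ, hχv k hk]
    simp [mul_assoc]

theorem exists_unit_conj_diagIdempotent (hR : IsSemiprimeRing R) (φ : K ≃+* K) :
    ∃ u : Kˣ, ∀ i, φ (diagIdempotent i) = (u : K) * diagIdempotent i * (↑u⁻¹ : K) := by
  obtain ⟨u, hu⟩ := exists_unit_conj_tailIdempotent hR φ n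
  refine ⟨u, fun i => ?_⟩
  rw [diagIdempotent_eq_sub, map_sub, hu _ (Nat.sub_le _ _), hu _ (by omega), mul_sub, sub_mul]

section Peirce

variable (ψ : triangularSubalgebra T R n ≃ₐ[T] triangularSubalgebra T R n)

def peirceMap (i j : Fin n) (h : i ≤ j) (r : R) : R :=
  (ψ (single i j h r : K)).1 i j

variable {ψ}
  (hψ : ∀ i : Fin n, ψ (diagIdempotent i) = (diagIdempotent i : triangularSubalgebra T R n))
include hψ

theorem diagIdempotent_mul_map_mul_diagIdempotent (A : K) (i j : Fin n) :
    diagIdempotent i * ψ A * diagIdempotent j =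
      ψ ((diagIdempotent i : K) * A * diagIdempotent j) := by
  rw [map_mul, map_mul, hψ, hψ]

theorem map_single (i j : Fin n) (h : i ≤ j) (r : R) :
    ψ (single i j h r : K) = single i j h (peirceMap ψ i j h r) := by
  have hr := diagIdempotent_mul_mul_diagIdempotent (single i j h r : K) h
  rw [single_apply_same] at hr
  conv_lhs => rw [← hr]
  rw [← diagIdempotent_mul_map_mul_diagIdempotent hψ, diagIdempotent_mul_mul_diagIdempotent _ h]
  rfl

theorem map_apply_of_le (A : K) {i j : Fin n} (h : i ≤ j) :
    (ψ A).1 i j = peirceMap ψ i j h (A.1 i j) := by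
  have := congrArg (fun X : K => X.1 i j) (diagIdempotent_mul_map_mul_diagIdempotent hψ A i j)
  rwa [diagIdempotent_mul_mul_diagIdempotent _ h, diagIdempotent_mul_mul_diagIdempotent _ h,
    single_apply_same] at this

theorem peirceMap_mul {i j l : Fin n} (hij : i ≤ j) (hjl : j ≤ l) (r s : R) :
    peirceMap ψ i l (hij.trans hjl) (r * s) = peirceMap ψ i j hij r * peirceMap ψ j l hjl s := by
  apply single_injective (T := T) i l (hij.trans hjl)
  rw [← map_single hψ, ← single_mul_single i j l hij hjl, map_mul, map_single hψ,
    map_single hψ, single_mul_single]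

theorem peirceMap_injective {i j : Fin n} (h : i ≤ j) : Function.Injective (peirceMap ψ i j h) :=
  fun r s hrs => single_injective i j h (ψ.injective (by rw [map_single hψ, map_single hψ, hrs]))

theorem peirceMap_surjective {i j : Fin n} (h : i ≤ j) :
    Function.Surjective (peirceMap ψ i j h) := by
  have hψ' : ∀ i : Fin n, ψ.symm (diagIdempotent i : K) = diagIdempotent i := fun i =>
    ψ.symm_apply_eq.2 (hψ i).symm
  refine fun s => ⟨peirceMap ψ.symm i j h s, single_injective (T := T) i j h ?_⟩
  rw [← map_single hψ, ← map_single hψ', AlgEquiv.apply_symm_apply]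

theorem isUnit_peirceMap_one {i j : Fin n} (h : i ≤ j) : IsUnit (peirceMap ψ i j h 1) := by
  obtain ⟨r, hr⟩ := peirceMap_surjective hψ h 1
  have hl : peirceMap ψ i i le_rfl r * peirceMap ψ i j h 1 = 1 := by
    rw [← peirceMap_mul hψ le_rfl h, mul_one, hr]
  have hr' : peirceMap ψ i j h 1 * peirceMap ψ j j le_rfl r = 1 := by
    rw [← peirceMap_mul hψ h le_rfl, one_mul, hr]
  exact ⟨⟨_, _, by rwa [left_inv_eq_right_inv hl hr'], hl⟩, rfl⟩

noncomputable def peirceAlgEquiv (i : Fin n) : R ≃ₐ[T] R :=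
  AlgEquiv.ofBijective
    { toFun := peirceMap ψ i i le_rfl
      map_one' := by
        change (ψ (diagIdempotent i)).1 i i = 1
        rw [hψ]
        exact single_apply_same i i le_rfl 1
      map_mul' := peirceMap_mul hψ le_rfl le_rfl
      map_zero' := by simp [peirceMap, single_zero]
      map_add' := fun r s => by simp [peirceMap, single_add]
      commutes' := fun t => by
        change (ψ (single i i le_rfl (algebraMap T R t))).1 i i = _
        rw [single_algebraMap, map_smul, hψ]
        simp [diagIdempotent, Algebra.algebraMap_eq_smul_one] }
    ⟨peirceMap_injective hψ le_rfl, peirceMap_surjective hψ le_rfl⟩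

theorem exists_eq_conj_entrywiseMap [NeZero n] :
    ∃ (W : Kˣ) (α : R ≃ₐ[T] R), ∀ A, ψ A = ↑W⁻¹ * entrywiseMap T R n α A * W := by
  let α := peirceAlgEquiv hψ 0
  let v : Fin n → Rˣ := fun j => (isUnit_peirceMap_one hψ (Fin.zero_le j)).unit
  have hv : ∀ j, (v j : R) = peirceMap ψ 0 j (Fin.zero_le j) 1 := fun j => IsUnit.unit_spec _
  have key : ∀ {i j : Fin n} (h : i ≤ j) (x : R), v i * peirceMap ψ i j h x = α x * v j := by
    intro i j h x
    calc v i * peirceMap ψ i j h x = peirceMap ψ 0 j ((Fin.zero_le i).trans h) (1 * x) := by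
          rw [hv, peirceMap_mul hψ]
      _ = peirceMap ψ 0 j ((Fin.zero_le 0).trans (Fin.zero_le j)) (x * 1) := by
          rw [one_mul, mul_one]
      _ = α x * v j := by rw [peirceMap_mul hψ, hv]; rfl
  refine ⟨diagonalUnit v, α, fun A => ?_⟩
  rw [mul_assoc, Units.eq_inv_mul_iff_mul_eq]
  refine Subtype.ext <| Matrix.ext fun i j => ?_
  change (diagonal _ * ψ A).1 i j = (entrywiseMap T R n α A * diagonal _).1 i j
  rw [diagonal_mul_apply, mul_diagonal_apply, entrywiseMap_apply]
  rcases le_or_gt i j with h | h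
  · rw [map_apply_of_le hψ A h, key h]
  · rw [(ψ A).2 h, A.2 h, map_zero, mul_zero, zero_mul]

end Peirce

end triangularSubalgebra

/-- If `R` is a semiprime `T`-algebra (no nonzero two-sided ideal with zero square), every
`T`-algebra automorphism of the upper triangular matrix algebra `T(n,R)` is a product of
an inner automorphism and a ring automorphism. -/
theorem stmt11 (T R : Type*) [CommRing T] [Ring R] [Algebra T R] (n : ℕ) (hn : 1 ≤ n)
    (hsemiprime : ∀ I : TwoSidedIdeal R, (∀ x ∈ I, ∀ y ∈ I, x * y = 0) → I = ⊥)
    (φ : triangularSubalgebra T R n ≃ₐ[T] triangularSubalgebra T R n) :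
    ∃ (u : (triangularSubalgebra T R n)ˣ) (α : R ≃ₐ[T] R),
      ∀ A : triangularSubalgebra T R n,
        φ A = ↑u * entrywiseMap T R n α A * ↑u⁻¹ := by
  have : NeZero n := ⟨by omega⟩
  obtain ⟨u, hu⟩ :=
    triangularSubalgebra.exists_unit_conj_diagIdempotent hsemiprime φ.toRingEquiv
  simp only [AlgEquiv.coe_ringEquiv] at hu
  let ψ := φ.trans (MulSemiringAction.toAlgEquiv T _ (ConjAct.toConjAct u⁻¹))
  have hφ : ∀ A, φ A = (u : triangularSubalgebra T R n) * ψ A * ↑u⁻¹ := fun A => by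
    simp [ψ, ConjAct.units_smul_def, mul_assoc]
  have hψ : ∀ i, ψ (triangularSubalgebra.diagIdempotent i) =
      triangularSubalgebra.diagIdempotent i := fun i => by
    simp [ψ, ConjAct.units_smul_def, hu, mul_assoc]
  obtain ⟨W, α, hW⟩ := triangularSubalgebra.exists_eq_conj_entrywiseMap hψ
  refine ⟨u * W⁻¹, α, fun A => ?_⟩
  rw [hφ, hW]
  simp [mul_assoc]
end
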